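/- arXiv:2306.00620 — 3 statements merged into one kernel-verified Lean document; each statement's English description precedes it below -/
import Mathlib

section
/- For nonnegative sequences a, b ∈ ℝ^n with equal total mass (∑ a_i = ∑ b_i), the optimal transport distance with cost D_{ij} = |i - j| equals the L1 distance between cumulative sums: W(a,b) = ∑_{i=1}^n |A(i) - B(i)|, where A(i) = ∑_{j≤i} a_j and B(i) = ∑_{j≤i} b_j. -/
open Finset

noncomputable section

/-- Cumulative sum `A(i) = ∑_{j=1}^i a j`. -/
def cumsum (a : ℕ → ℝ) (i : ℕ) : ℝ := ∑ j ∈ Finset.Icc 1 i, a j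

/-- Windowed cumulative sum `A_s(i) = ∑_{j=1}^i a j − ∑_{j=1}^{i−s} a j`. -/
def wcumsum (a : ℕ → ℝ) (s i : ℕ) : ℝ := cumsum a i - cumsum a (i - s)

/-- Transport cost `⟨T, D⟩` with `D_{ij} = |i − j|`, indices in `[1, n]`. -/
def otCost (n : ℕ) (T : ℕ → ℕ → ℝ) : ℝ :=
  ∑ i ∈ Finset.Icc 1 n, ∑ j ∈ Finset.Icc 1 n, T i j * |(i : ℝ) - (j : ℝ)|

/-- Feasible (balanced) transport plan: nonnegative, row sums `a`, column sums `b`. -/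
def IsPlan (n : ℕ) (a b : ℕ → ℝ) (T : ℕ → ℕ → ℝ) : Prop :=
  (∀ i ∈ Finset.Icc 1 n, ∀ j ∈ Finset.Icc 1 n, 0 ≤ T i j) ∧
  (∀ i ∈ Finset.Icc 1 n, ∑ j ∈ Finset.Icc 1 n, T i j = a i) ∧
  (∀ j ∈ Finset.Icc 1 n, ∑ i ∈ Finset.Icc 1 n, T i j = b j)

/-- Balanced optimal transport distance with cost `|i − j|`. -/
def W (n : ℕ) (a b : ℕ → ℝ) : ℝ :=
  sInf {c | ∃ T, IsPlan n a b T ∧ c = otCost n T}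

/-- Extended cost matrix `D(m)`: `|i−j|` on `[1,n]×[1,n]`, `m` to/from the sink `n+1`,
`0` between sinks. -/
def Dm (n : ℕ) (m : ℝ) (i j : ℕ) : ℝ :=
  if i = n + 1 then (if j = n + 1 then 0 else m)
  else if j = n + 1 then m else |(i : ℝ) - (j : ℝ)|

/-- Extended sequence: append `mass` at the sink index `n+1`. -/
def extSeq (n : ℕ) (a : ℕ → ℝ) (mass : ℝ) (i : ℕ) : ℝ :=
  if i = n + 1 then mass else a i

/-- Unbalanced transport cost `⟨T, D(m)⟩`, indices in `[1, n+1]`. -/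
def uCost (n : ℕ) (m : ℝ) (T : ℕ → ℕ → ℝ) : ℝ :=
  ∑ i ∈ Finset.Icc 1 (n+1), ∑ j ∈ Finset.Icc 1 (n+1), T i j * Dm n m i j

/-- Feasible unbalanced plan: nonnegative, row sums `â = (a, ∑ b)`, column sums
`b̂ = (b, ∑ a)`. -/
def IsUPlan (n : ℕ) (a b : ℕ → ℝ) (T : ℕ → ℕ → ℝ) : Prop :=
  (∀ i ∈ Finset.Icc 1 (n+1), ∀ j ∈ Finset.Icc 1 (n+1), 0 ≤ T i j) ∧
  (∀ i ∈ Finset.Icc 1 (n+1), ∑ j ∈ Finset.Icc 1 (n+1), T i j = extSeq n a (cumsum b n) i) ∧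
  (∀ j ∈ Finset.Icc 1 (n+1), ∑ i ∈ Finset.Icc 1 (n+1), T i j = extSeq n b (cumsum a n) j)

/-- Unbalanced optimal transport distance `Ŵ_m(a, b)`. -/
def uW (n : ℕ) (m : ℝ) (a b : ℕ → ℝ) : ℝ :=
  sInf {c | ∃ T, IsUPlan n a b T ∧ c = uCost n m T}

/-- Global OTW distance `OTW_m(a,b) = m|A(n) − B(n)| + ∑_{i=1}^{n−1} |A(i) − B(i)|`. -/
def otwGlobal (n : ℕ) (m : ℝ) (a b : ℕ → ℝ) : ℝ :=
  m * |cumsum a n - cumsum b n| +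
    ∑ i ∈ Finset.Icc 1 (n-1), |cumsum a i - cumsum b i|

/-- Local OTW distance with window `s`:
`OTW_{m,s}(a,b) = m|A_s(n) − B_s(n)| + ∑_{i=1}^{n−1} |A_s(i) − B_s(i)|`. -/
def otwLocal (n : ℕ) (m : ℝ) (s : ℕ) (a b : ℕ → ℝ) : ℝ :=
  m * |wcumsum a s n - wcumsum b s n| +
    ∑ i ∈ Finset.Icc 1 (n-1), |wcumsum a s i - wcumsum b s i|

/-- Smooth ℓ1-loss `L_β`. -/
def smoothL1 (β x : ℝ) : ℝ := if |x| < β then x^2 / (2*β) else |x| - β/2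

/-- Smoothed OTW distance `OTW^β_{m,s}`. -/
def otwSmooth (n : ℕ) (m : ℝ) (s : ℕ) (β : ℝ) (a b : ℕ → ℝ) : ℝ :=
  m * smoothL1 β (wcumsum a s n - wcumsum b s n) +
    ∑ i ∈ Finset.Icc 1 (n-1), smoothL1 β (wcumsum a s i - wcumsum b s i)


/- ### Auxiliary machinery for Vallender's formula -/

private def chi (i k : ℕ) : ℝ := if i ≤ k then 1 else 0

private def mplan (a b : ℕ → ℝ) (i j : ℕ) : ℝ :=
  min (cumsum a i) (cumsum b j) - min (cumsum a i) (cumsum b (j-1))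
    - min (cumsum a (i-1)) (cumsum b j) + min (cumsum a (i-1)) (cumsum b (j-1))

private lemma cumsum_zero' (a : ℕ → ℝ) : cumsum a 0 = 0 := by simp [cumsum]

private lemma cumsum_succ' (a : ℕ → ℝ) (k : ℕ) : cumsum a (k+1) = cumsum a k + a (k+1) := by
  simp [cumsum, Finset.sum_Icc_succ_top (by omega : 1 ≤ k + 1)]

private lemma sum_telescope' (f : ℕ → ℝ) (q : ℕ) :
    ∑ j ∈ Finset.Icc 1 q, (f j - f (j-1)) = f q - f 0 := by
  induction q with
  | zero => simp
  | succ q ih =>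
    rw [Finset.sum_Icc_succ_top (by omega : 1 ≤ q + 1), ih]
    simp

private lemma sum_chi_mul (f : ℕ → ℝ) (n k : ℕ) (hk : k ≤ n) :
    ∑ i ∈ Finset.Icc 1 n, chi i k * f i = ∑ i ∈ Finset.Icc 1 k, f i := by
  have h : ∀ i, chi i k * f i = if i ≤ k then f i else 0 := by
    intro i; simp [chi, ite_mul]
  rw [Finset.sum_congr rfl fun i _ => h i]
  rw [← Finset.sum_subset (Finset.Icc_subset_Icc_right hk)
      (by intro x hx hxs; simp only [Finset.mem_Icc] at hx hxs; rw [if_neg (by omega)])]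
  exact Finset.sum_congr rfl fun x hx => if_pos (Finset.mem_Icc.mp hx).2

private lemma min_supermod {x x' y y' : ℝ} (hx : x' ≤ x) (hy : y' ≤ y) :
    min x y' + min x' y ≤ min x y + min x' y' := by
  simp only [min_def]; split_ifs <;> linarith

private lemma abs_sub_eq_add_sub_two_min (x y : ℝ) : |x - y| = x + y - 2 * min x y := by
  rcases le_total x y with h | h
  · rw [min_eq_left h, abs_of_nonpos (by linarith)]; ring
  · rw [min_eq_right h, abs_of_nonneg (by linarith)]; ring

private lemma chi_abs (i j k : ℕ) :
    |chi i k - chi j k| = chi i k + chi j k - 2 * (chi i k * chi j k) := by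
  simp only [chi]; split_ifs <;> norm_num

private lemma abs_cast_sub (n i j : ℕ) (hi : i ∈ Finset.Icc 1 n) (hj : j ∈ Finset.Icc 1 n) :
    |(i:ℝ) - j| = ∑ k ∈ Finset.Icc 1 n, |chi i k - chi j k| := by
  simp only [Finset.mem_Icc] at hi hj
  have step : ∀ k, |chi i k - chi j k| = if k ∈ Finset.Ico (min i j) (max i j) then (1:ℝ) else 0 := by
    intro k
    simp only [chi, Finset.mem_Ico]
    split_ifs <;> simp_all <;> omega
  rw [Finset.sum_congr rfl fun k _ => step k, Finset.sum_ite_mem,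
      Finset.inter_eq_right.mpr (by intro k hk; simp only [Finset.mem_Ico, Finset.mem_Icc] at *; omega),
      Finset.sum_const, Nat.card_Ico, nsmul_eq_mul, mul_one]
  rcases le_total i j with h | h
  · rw [min_eq_left h, max_eq_right h, Nat.cast_sub h, abs_sub_comm,
      abs_of_nonneg (by simp [sub_nonneg]; exact_mod_cast h)]
  · rw [min_eq_right h, max_eq_left h, Nat.cast_sub h,
      abs_of_nonneg (by simp [sub_nonneg]; exact_mod_cast h)]

private lemma cost_decomp (n : ℕ) (T : ℕ → ℕ → ℝ) :
    otCost n T = ∑ k ∈ Finset.Icc 1 n, ∑ i ∈ Finset.Icc 1 n, ∑ j ∈ Finset.Icc 1 n,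
      T i j * |chi i k - chi j k| := by
  unfold otCost
  rw [Finset.sum_congr rfl fun i hi => Finset.sum_congr rfl fun j hj => by
    rw [abs_cast_sub n i j hi hj, Finset.mul_sum]]
  rw [Finset.sum_congr rfl fun i _ => Finset.sum_comm]
  exact Finset.sum_comm

private lemma marg_row (n k : ℕ) (hk : k ≤ n) (a : ℕ → ℝ) (T : ℕ → ℕ → ℝ)
    (hrow : ∀ i ∈ Finset.Icc 1 n, ∑ j ∈ Finset.Icc 1 n, T i j = a i) :
    ∑ i ∈ Finset.Icc 1 n, ∑ j ∈ Finset.Icc 1 n, T i j * chi i k = cumsum a k := by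
  rw [show cumsum a k = ∑ i ∈ Finset.Icc 1 k, a i from rfl, ← sum_chi_mul a n k hk]
  refine Finset.sum_congr rfl fun i hi => ?_
  rw [← Finset.sum_mul, hrow i hi, mul_comm]

private lemma plan_lower (n : ℕ) (a b : ℕ → ℝ) (T : ℕ → ℕ → ℝ) (h : IsPlan n a b T) :
    ∑ k ∈ Finset.Icc 1 n, |cumsum a k - cumsum b k| ≤ otCost n T := by
  obtain ⟨hnn, hrow, hcol⟩ := h
  rw [cost_decomp]
  refine Finset.sum_le_sum fun k hk => ?_
  simp only [Finset.mem_Icc] at hk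
  have key : cumsum a k - cumsum b k =
      ∑ i ∈ Finset.Icc 1 n, ∑ j ∈ Finset.Icc 1 n, T i j * (chi i k - chi j k) := by
    have ha' : cumsum a k = ∑ i ∈ Finset.Icc 1 n, ∑ j ∈ Finset.Icc 1 n, T i j * chi i k :=
      (marg_row n k hk.2 a T hrow).symm
    have hb' : cumsum b k = ∑ i ∈ Finset.Icc 1 n, ∑ j ∈ Finset.Icc 1 n, T i j * chi j k := by
      rw [Finset.sum_comm]; exact (marg_row n k hk.2 b (fun j i => T i j) hcol).symm
    rw [ha', hb', ← Finset.sum_sub_distrib]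
    exact Finset.sum_congr rfl fun i _ => by
      rw [← Finset.sum_sub_distrib]
      exact Finset.sum_congr rfl fun j _ => by ring
  rw [key]
  calc |∑ i ∈ Finset.Icc 1 n, ∑ j ∈ Finset.Icc 1 n, T i j * (chi i k - chi j k)|
      ≤ ∑ i ∈ Finset.Icc 1 n, |∑ j ∈ Finset.Icc 1 n, T i j * (chi i k - chi j k)| :=
        Finset.abs_sum_le_sum_abs _ _
    _ ≤ ∑ i ∈ Finset.Icc 1 n, ∑ j ∈ Finset.Icc 1 n, |T i j * (chi i k - chi j k)| :=
        Finset.sum_le_sum fun i _ => Finset.abs_sum_le_sum_abs _ _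
    _ = ∑ i ∈ Finset.Icc 1 n, ∑ j ∈ Finset.Icc 1 n, T i j * |chi i k - chi j k| :=
        Finset.sum_congr rfl fun i hi => Finset.sum_congr rfl fun j hj => by
          rw [abs_mul, abs_of_nonneg (hnn i hi j hj)]

private lemma cs_nonneg {n : ℕ} {a : ℕ → ℝ} (ha : ∀ i ∈ Finset.Icc 1 n, 0 ≤ a i)
    (k : ℕ) (hk : k ≤ n) : 0 ≤ cumsum a k :=
  Finset.sum_nonneg fun i hi => ha i (Finset.Icc_subset_Icc_right hk hi)

private lemma cs_mono {n : ℕ} {a : ℕ → ℝ} (ha : ∀ i ∈ Finset.Icc 1 n, 0 ≤ a i)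
    {k l : ℕ} (hkl : k ≤ l) (hl : l ≤ n) : cumsum a k ≤ cumsum a l :=
  Finset.sum_le_sum_of_subset_of_nonneg (Finset.Icc_subset_Icc_right hkl)
    fun i hi _ => ha i (Finset.Icc_subset_Icc_right hl hi)

private lemma mplan_row {n : ℕ} {a b : ℕ → ℝ} (ha : ∀ i ∈ Finset.Icc 1 n, 0 ≤ a i)
    (i : ℕ) (hi : i ≤ n) (q : ℕ) :
    ∑ j ∈ Finset.Icc 1 q, mplan a b i j
      = min (cumsum a i) (cumsum b q) - min (cumsum a (i-1)) (cumsum b q) := by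
  have e : ∀ j, mplan a b i j =
      (fun j => min (cumsum a i) (cumsum b j) - min (cumsum a (i-1)) (cumsum b j)) j
      - (fun j => min (cumsum a i) (cumsum b j) - min (cumsum a (i-1)) (cumsum b j)) (j-1) := by
    intro j; simp only [mplan]; ring
  rw [Finset.sum_congr rfl fun j _ => e j, sum_telescope']
  simp only [cumsum_zero', min_eq_right (cs_nonneg ha i hi),
    min_eq_right (cs_nonneg ha (i-1) (by omega))]
  ring

private lemma mplan_col {n : ℕ} {a b : ℕ → ℝ} (hb : ∀ i ∈ Finset.Icc 1 n, 0 ≤ b i)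
    (j : ℕ) (hj : j ≤ n) (p : ℕ) :
    ∑ i ∈ Finset.Icc 1 p, mplan a b i j
      = min (cumsum a p) (cumsum b j) - min (cumsum a p) (cumsum b (j-1)) := by
  have e : ∀ i, mplan a b i j =
      (fun i => min (cumsum a i) (cumsum b j) - min (cumsum a i) (cumsum b (j-1))) i
      - (fun i => min (cumsum a i) (cumsum b j) - min (cumsum a i) (cumsum b (j-1))) (i-1) := by
    intro i; simp only [mplan]; ring
  rw [Finset.sum_congr rfl fun i _ => e i, sum_telescope']
  simp only [cumsum_zero', min_eq_left (cs_nonneg hb j hj),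
    min_eq_left (cs_nonneg hb (j-1) (by omega))]
  ring

private lemma mplan_rect {n : ℕ} {a b : ℕ → ℝ} (ha : ∀ i ∈ Finset.Icc 1 n, 0 ≤ a i)
    (hb : ∀ i ∈ Finset.Icc 1 n, 0 ≤ b i) (p : ℕ) (hp : p ≤ n) (q : ℕ) (hq : q ≤ n) :
    ∑ i ∈ Finset.Icc 1 p, ∑ j ∈ Finset.Icc 1 q, mplan a b i j
      = min (cumsum a p) (cumsum b q) := by
  rw [Finset.sum_congr rfl fun i hi =>
    mplan_row ha i (le_trans (Finset.mem_Icc.mp hi).2 hp) q]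
  have : ∑ i ∈ Finset.Icc 1 p,
      (min (cumsum a i) (cumsum b q) - min (cumsum a (i-1)) (cumsum b q))
      = ∑ i ∈ Finset.Icc 1 p, ((fun i => min (cumsum a i) (cumsum b q)) i
        - (fun i => min (cumsum a i) (cumsum b q)) (i-1)) := rfl
  rw [this, sum_telescope', cumsum_zero', min_eq_left (cs_nonneg hb q hq)]
  ring

private lemma mplan_isplan {n : ℕ} {a b : ℕ → ℝ} (ha : ∀ i ∈ Finset.Icc 1 n, 0 ≤ a i)
    (hb : ∀ i ∈ Finset.Icc 1 n, 0 ≤ b i) (hmass : cumsum a n = cumsum b n) :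
    IsPlan n a b (mplan a b) := by
  refine ⟨?_, ?_, ?_⟩
  · intro i hi j hj
    simp only [Finset.mem_Icc] at hi hj
    have h1 : cumsum a (i-1) ≤ cumsum a i := cs_mono ha (by omega) hi.2
    have h2 : cumsum b (j-1) ≤ cumsum b j := cs_mono hb (by omega) hj.2
    have h3 := min_supermod h1 h2
    simp only [mplan]; linarith
  · intro i hi
    simp only [Finset.mem_Icc] at hi
    rw [mplan_row ha i hi.2 n, ← hmass,
      min_eq_left (cs_mono ha hi.2 le_rfl), min_eq_left (cs_mono ha (by omega) le_rfl)]
    obtain ⟨m, rfl⟩ : ∃ m, i = m + 1 := ⟨i-1, by omega⟩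
    rw [Nat.add_sub_cancel, cumsum_succ']
    ring
  · intro j hj
    simp only [Finset.mem_Icc] at hj
    rw [mplan_col hb j hj.2 n, hmass,
      min_eq_right (cs_mono hb hj.2 le_rfl), min_eq_right (cs_mono hb (by omega) le_rfl)]
    obtain ⟨m, rfl⟩ : ∃ m, j = m + 1 := ⟨j-1, by omega⟩
    rw [Nat.add_sub_cancel, cumsum_succ']
    ring

private lemma mplan_cost {n : ℕ} {a b : ℕ → ℝ} (ha : ∀ i ∈ Finset.Icc 1 n, 0 ≤ a i)
    (hb : ∀ i ∈ Finset.Icc 1 n, 0 ≤ b i) (hmass : cumsum a n = cumsum b n) :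
    otCost n (mplan a b) = ∑ k ∈ Finset.Icc 1 n, |cumsum a k - cumsum b k| := by
  obtain ⟨hnn, hrow, hcol⟩ := mplan_isplan ha hb hmass
  rw [cost_decomp]
  refine Finset.sum_congr rfl fun k hk => ?_
  simp only [Finset.mem_Icc] at hk
  have e : ∀ i j, mplan a b i j * |chi i k - chi j k|
      = mplan a b i j * chi i k + mplan a b i j * chi j k
        - 2 * (chi i k * (chi j k * mplan a b i j)) := by
    intro i j; rw [chi_abs]; ring
  rw [Finset.sum_congr rfl fun i _ => Finset.sum_congr rfl fun j _ => e i j]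
  simp only [Finset.sum_add_distrib, Finset.sum_sub_distrib]
  have h1 : ∑ i ∈ Finset.Icc 1 n, ∑ j ∈ Finset.Icc 1 n, mplan a b i j * chi i k
      = cumsum a k := marg_row n k hk.2 a _ hrow
  have h2 : ∑ i ∈ Finset.Icc 1 n, ∑ j ∈ Finset.Icc 1 n, mplan a b i j * chi j k
      = cumsum b k := by
    rw [Finset.sum_comm]
    exact marg_row n k hk.2 b (fun j i => mplan a b i j) hcol
  have h3 : ∑ i ∈ Finset.Icc 1 n, ∑ j ∈ Finset.Icc 1 n,
      2 * (chi i k * (chi j k * mplan a b i j)) = 2 * min (cumsum a k) (cumsum b k) := by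
    have e1 : ∀ i, ∑ j ∈ Finset.Icc 1 n, 2 * (chi i k * (chi j k * mplan a b i j))
        = 2 * (chi i k * ∑ j ∈ Finset.Icc 1 k, mplan a b i j) := by
      intro i
      rw [← Finset.mul_sum, ← Finset.mul_sum, sum_chi_mul (fun j => mplan a b i j) n k hk.2]
    rw [Finset.sum_congr rfl fun i _ => e1 i, ← Finset.mul_sum,
      sum_chi_mul (fun i => ∑ j ∈ Finset.Icc 1 k, mplan a b i j) n k hk.2,
      mplan_rect ha hb k hk.2 k hk.2]
  rw [h1, h2, h3, abs_sub_eq_add_sub_two_min]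

/-- Vallender's formula for balanced nonnegative sequences. -/
theorem ot_eq_l1_of_cumsum (n : ℕ) (a b : ℕ → ℝ)
    (ha : ∀ i ∈ Finset.Icc 1 n, 0 ≤ a i) (hb : ∀ i ∈ Finset.Icc 1 n, 0 ≤ b i)
    (hmass : cumsum a n = cumsum b n) :
    W n a b = ∑ i ∈ Finset.Icc 1 n, |cumsum a i - cumsum b i| := by
  have hmem : (∑ i ∈ Finset.Icc 1 n, |cumsum a i - cumsum b i|) ∈
      {c | ∃ T, IsPlan n a b T ∧ c = otCost n T} :=
    ⟨mplan a b, mplan_isplan ha hb hmass, (mplan_cost ha hb hmass).symm⟩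
  have hlb : ∀ c ∈ {c | ∃ T, IsPlan n a b T ∧ c = otCost n T},
      (∑ i ∈ Finset.Icc 1 n, |cumsum a i - cumsum b i|) ≤ c := by
    rintro c ⟨T, hT, rfl⟩
    exact plan_lower n a b T hT
  exact le_antisymm (csInf_le ⟨_, hlb⟩ hmem) (le_csInf ⟨_, hmem⟩ hlb)

end
end

section
/- Let a, b ∈ ℝ^n be nonnegative with ∑ a_j ≤ ∑ b_j, and let c ∈ ℝ^n satisfy 0 ≤ c ≤ b and ∑ c_j = ∑ a_j. Then the unbalanced optimal transport distance satisfies Ŵ_m(a,b) ≤ W(a,c) + m(∑ b_j − ∑ a_j), where W is the balanced OT distance with cost |i−j|. -/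
open Finset

noncomputable section

lemma Dm_nonneg (n : ℕ) (m : ℝ) (hm : 0 ≤ m) (i j : ℕ) : 0 ≤ Dm n m i j := by
  unfold Dm; split_ifs <;> first | exact le_refl 0 | exact hm | exact abs_nonneg _

lemma uCost_nonneg (n : ℕ) (m : ℝ) (hm : 0 ≤ m) (T : ℕ → ℕ → ℝ)
    (hT : ∀ i ∈ Finset.Icc 1 (n+1), ∀ j ∈ Finset.Icc 1 (n+1), 0 ≤ T i j) :
    0 ≤ uCost n m T := by
  refine Finset.sum_nonneg fun i hi => Finset.sum_nonneg fun j hj => ?_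
  exact mul_nonneg (hT i hi j hj) (Dm_nonneg n m hm i j)

/-- upper bound on the unbalanced OT distance via a balanced plan. -/
theorem unbalanced_le_balanced_add (n : ℕ) (m : ℝ) (hm : 0 ≤ m) (a b c : ℕ → ℝ)
    (ha : ∀ i ∈ Finset.Icc 1 n, 0 ≤ a i) (hb : ∀ i ∈ Finset.Icc 1 n, 0 ≤ b i)
    (hab : cumsum a n ≤ cumsum b n)
    (hc0 : ∀ i ∈ Finset.Icc 1 n, 0 ≤ c i) (hcb : ∀ i ∈ Finset.Icc 1 n, c i ≤ b i)
    (hcmass : cumsum c n = cumsum a n) :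
    uW n m a b ≤ W n a c + m * (cumsum b n - cumsum a n) := by
  have hA0 : 0 ≤ cumsum a n := Finset.sum_nonneg ha
  have hbdd : BddBelow {x | ∃ T, IsUPlan n a b T ∧ x = uCost n m T} := by
    refine ⟨0, fun x hx => ?_⟩
    obtain ⟨T, hT, rfl⟩ := hx
    exact uCost_nonneg n m hm T hT.1
  -- key step: each balanced plan a → c yields an unbalanced plan
  have key : ∀ T, IsPlan n a c T →
      uW n m a b ≤ otCost n T + m * (cumsum b n - cumsum a n) := by
    intro T hT
    obtain ⟨hTnn, hTrow, hTcol⟩ := hT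
    set That : ℕ → ℕ → ℝ := fun i j =>
      if i = n + 1 then (if j = n + 1 then cumsum a n else b j - c j)
      else if j = n + 1 then 0 else T i j with hThat
    have hmem1 : ∀ i ∈ Finset.Icc 1 n, i ≠ n + 1 := by
      intro i hi; rw [Finset.mem_Icc] at hi; omega
    have hT1 : ∀ i ∈ Finset.Icc 1 n, ∀ j ∈ Finset.Icc 1 n, That i j = T i j := by
      intro i hi j hj; simp [hThat, hmem1 i hi, hmem1 j hj]
    have hT2 : ∀ i ∈ Finset.Icc 1 n, That i (n+1) = 0 := by
      intro i hi; simp [hThat, hmem1 i hi]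
    have hT3 : ∀ j ∈ Finset.Icc 1 n, That (n+1) j = b j - c j := by
      intro j hj; simp [hThat, hmem1 j hj]
    have hT4 : That (n+1) (n+1) = cumsum a n := by simp [hThat]
    have hUP : IsUPlan n a b That := by
      refine ⟨?_, ?_, ?_⟩
      · intro i hi j hj
        rcases eq_or_ne i (n+1) with rfl | hne
        · rcases eq_or_ne j (n+1) with rfl | hnej
          · rw [hT4]; exact hA0
          · have hj' : j ∈ Finset.Icc 1 n := by
              rw [Finset.mem_Icc] at hj ⊢; omega
            rw [hT3 j hj']; linarith [hcb j hj']
        · have hi' : i ∈ Finset.Icc 1 n := by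
            rw [Finset.mem_Icc] at hi ⊢; omega
          rcases eq_or_ne j (n+1) with rfl | hnej
          · rw [hT2 i hi']
          · have hj' : j ∈ Finset.Icc 1 n := by
              rw [Finset.mem_Icc] at hj ⊢; omega
            rw [hT1 i hi' j hj']; exact hTnn i hi' j hj'
      · intro i hi
        rcases eq_or_ne i (n+1) with rfl | hne
        · rw [Finset.sum_Icc_succ_top (by omega : 1 ≤ n + 1), hT4,
            Finset.sum_congr rfl hT3, Finset.sum_sub_distrib]
          have hbb : (∑ j ∈ Finset.Icc 1 n, b j) = cumsum b n := rfl
          have hcc : (∑ j ∈ Finset.Icc 1 n, c j) = cumsum a n := hcmass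
          rw [hbb, hcc]
          simp [extSeq]
        · have hi' : i ∈ Finset.Icc 1 n := by
            rw [Finset.mem_Icc] at hi ⊢; omega
          rw [Finset.sum_Icc_succ_top (by omega : 1 ≤ n + 1), hT2 i hi',
            Finset.sum_congr rfl (fun j hj => hT1 i hi' j hj), hTrow i hi', add_zero]
          simp [extSeq, hne]
      · intro j hj
        rcases eq_or_ne j (n+1) with rfl | hne
        · rw [Finset.sum_Icc_succ_top (by omega : 1 ≤ n + 1), hT4,
            Finset.sum_congr rfl hT2, Finset.sum_const_zero, zero_add]
          simp [extSeq]
        · have hj' : j ∈ Finset.Icc 1 n := by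
            rw [Finset.mem_Icc] at hj ⊢; omega
          rw [Finset.sum_Icc_succ_top (by omega : 1 ≤ n + 1), hT3 j hj',
            Finset.sum_congr rfl (fun i hi => hT1 i hi j hj'), hTcol j hj']
          simp [extSeq, hne]
    have hcost : uCost n m That = otCost n T + m * (cumsum b n - cumsum a n) := by
      unfold uCost
      rw [Finset.sum_Icc_succ_top (by omega : 1 ≤ n + 1)]
      have hrow : ∀ i ∈ Finset.Icc 1 n,
          (∑ j ∈ Finset.Icc 1 (n+1), That i j * Dm n m i j)
            = ∑ j ∈ Finset.Icc 1 n, T i j * |(i:ℝ) - (j:ℝ)| := by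
        intro i hi
        rw [Finset.sum_Icc_succ_top (by omega : 1 ≤ n + 1)]
        rw [hT2 i hi, zero_mul, add_zero]
        refine Finset.sum_congr rfl fun j hj => ?_
        have hT' : That i j = T i j := hT1 i hi j hj
        have hD : Dm n m i j = |(i:ℝ) - (j:ℝ)| := by
          simp only [Dm, if_neg (hmem1 i hi), if_neg (hmem1 j hj)]
        rw [hT', hD]
      have hlast : (∑ j ∈ Finset.Icc 1 (n+1), That (n+1) j * Dm n m (n+1) j)
          = (cumsum b n - cumsum a n) * m := by
        rw [Finset.sum_Icc_succ_top (by omega : 1 ≤ n + 1)]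
        have h1 : Dm n m (n+1) (n+1) = 0 := by simp [Dm]
        rw [h1, mul_zero, add_zero]
        have : (∑ j ∈ Finset.Icc 1 n, That (n+1) j * Dm n m (n+1) j)
            = ∑ j ∈ Finset.Icc 1 n, (b j - c j) * m := by
          refine Finset.sum_congr rfl fun j hj => ?_
          have hT' : That (n+1) j = b j - c j := hT3 j hj
          have hD : Dm n m (n+1) j = m := by
            simp [Dm, hmem1 j hj]
          rw [hT', hD]
        rw [this, ← Finset.sum_mul, Finset.sum_sub_distrib]
        have hbb : (∑ j ∈ Finset.Icc 1 n, b j) = cumsum b n := rfl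
        have hcc : (∑ j ∈ Finset.Icc 1 n, c j) = cumsum a n := hcmass
        rw [hbb, hcc]
      rw [Finset.sum_congr rfl hrow, hlast]
      unfold otCost
      ring
    calc uW n m a b ≤ uCost n m That := csInf_le hbdd ⟨That, hUP, rfl⟩
      _ = otCost n T + m * (cumsum b n - cumsum a n) := hcost
  -- a balanced plan a → c exists
  have hne : {x | ∃ T, IsPlan n a c T ∧ x = otCost n T}.Nonempty := by
    rcases eq_or_lt_of_le hA0 with hA | hA
    · -- total mass zero: zero plan
      have ha0 : ∀ i ∈ Finset.Icc 1 n, a i = 0 := by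
        have := (Finset.sum_eq_zero_iff_of_nonneg ha).mp hA.symm
        exact this
      have hc0' : ∀ i ∈ Finset.Icc 1 n, c i = 0 := by
        have : cumsum c n = 0 := by rw [hcmass, ← hA]
        exact (Finset.sum_eq_zero_iff_of_nonneg hc0).mp this
      refine ⟨otCost n (fun _ _ => 0), ⟨fun _ _ => 0, ⟨?_, ?_, ?_⟩, rfl⟩⟩
      · intro i _ j _; exact le_refl 0
      · intro i hi; rw [Finset.sum_const_zero, ha0 i hi]
      · intro j hj; rw [Finset.sum_const_zero, hc0' j hj]
    · -- product plan
      set A := cumsum a n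
      refine ⟨otCost n (fun i j => a i * c j / A),
        ⟨fun i j => a i * c j / A, ⟨?_, ?_, ?_⟩, rfl⟩⟩
      · intro i hi j hj
        exact div_nonneg (mul_nonneg (ha i hi) (hc0 j hj)) hA0
      · intro i hi
        rw [← Finset.sum_div, ← Finset.mul_sum]
        have : (∑ j ∈ Finset.Icc 1 n, c j) = A := hcmass
        rw [this, mul_div_assoc, div_self (ne_of_gt hA), mul_one]
      · intro j hj
        have : (∑ i ∈ Finset.Icc 1 n, a i * c j / A)
            = (∑ i ∈ Finset.Icc 1 n, a i) * c j / A := by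
          rw [← Finset.sum_div, ← Finset.sum_mul]
        rw [this]
        have hAA : (∑ i ∈ Finset.Icc 1 n, a i) = A := rfl
        rw [hAA, mul_comm, mul_div_assoc, div_self (ne_of_gt hA), mul_one]
  have hW : uW n m a b - m * (cumsum b n - cumsum a n) ≤ W n a c := by
    refine le_csInf hne ?_
    rintro x ⟨T, hT, rfl⟩
    linarith [key T hT]
  linarith

end
end

section
/- For nonnegative sequences a, b ∈ ℝ^n and waste cost m ≥ 0, the unbalanced optimal transport distance is upper-bounded by the OTW distance: Ŵ_m(a,b) ≤ m|A(n) − B(n)| + ∑_{i=1}^{n−1} |A(i) − B(i)|, where A(i) = ∑_{j≤i} a_j and B(i) = ∑_{j≤i} b_j. -/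
open Finset

noncomputable section

namespace UOTAux


lemma clamp_step (p q x y : ℝ) (hqp : q ≤ p) (hxy : x ≤ y) :
    max 0 (min p y - max q x) = min p (max q y) - min p (max q x) := by
  simp only [min_def, max_def]
  split_ifs <;> linarith

lemma sub_min_eq (p q c : ℝ) (hqp : q ≤ p) :
    p - min p (max q c) = max p c - max q c := by
  simp only [min_def, max_def]
  split_ifs <;> linarith

lemma sum_clamp (p q : ℝ) (hqp : q ≤ p) (G : ℕ → ℝ) (s : ℕ) (hs : 1 ≤ s) :
    ∀ N, s ≤ N + 1 → (∀ j, s ≤ j → j ≤ N → G (j-1) ≤ G j) →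
    ∑ j ∈ Icc s N, max 0 (min p (G j) - max q (G (j-1))) =
      min p (max q (G N)) - min p (max q (G (s-1)))
  | 0, hsN, hG => by
      have hs1 : s = 1 := by omega
      subst hs1
      simp
  | (N+1), hsN, hG => by
      by_cases h : s = N + 2
      · subst h
        rw [Finset.Icc_eq_empty (by omega)]
        simp [show N + 2 - 1 = N + 1 from rfl]
      · have hsN' : s ≤ N + 1 := by omega
        rw [Finset.sum_Icc_succ_top hsN',
          sum_clamp p q hqp G s hs N hsN' (fun j hj1 hj2 => hG j hj1 (by omega)),
          show N + 1 - 1 = N from rfl,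
          clamp_step p q (G N) (G (N+1)) hqp (hG (N+1) hsN' (le_refl _))]
        ring

lemma tele (g : ℕ → ℝ) : ∀ k, ∑ i ∈ Icc 1 k, (g i - g (i-1)) = g k - g 0
  | 0 => by simp
  | (k+1) => by
      rw [Finset.sum_Icc_succ_top (by omega), tele g k, show k + 1 - 1 = k from rfl]
      ring

lemma mono_of_steps (F : ℕ → ℝ) (N : ℕ) (h : ∀ i, 1 ≤ i → i ≤ N → F (i-1) ≤ F i) :
    ∀ j k, j ≤ k → k ≤ N → F j ≤ F k := by
  intro j k
  induction k with
  | zero =>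
      intro h1 _
      have hj : j = 0 := by omega
      subst hj
      exact le_rfl
  | succ k ih =>
      intro hjk hkN
      rcases Nat.lt_or_ge j (k+1) with h1 | h1
      · exact le_trans (ih (by omega) (by omega))
          (by have := h (k+1) (by omega) hkN; simpa using this)
      · have : j = k + 1 := by omega
        subst this; exact le_rfl


lemma cumsum_zero (x : ℕ → ℝ) : cumsum x 0 = 0 := by simp [cumsum]

lemma cumsum_step (x : ℕ → ℝ) (i : ℕ) (hi : 1 ≤ i) :
    cumsum x i = cumsum x (i-1) + x i := by
  obtain ⟨j, rfl⟩ : ∃ j, i = j + 1 := ⟨i - 1, by omega⟩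
  rw [cumsum, cumsum, Finset.sum_Icc_succ_top (by omega : 1 ≤ j + 1)]
  simp

lemma cumsum_ext (n : ℕ) (x : ℕ → ℝ) (M : ℝ) (i : ℕ) (hi : i ≤ n) :
    cumsum (extSeq n x M) i = cumsum x i := by
  refine Finset.sum_congr rfl fun j hj => ?_
  simp only [mem_Icc] at hj
  rw [extSeq, if_neg (by omega)]

lemma cumsum_nonneg (x : ℕ → ℝ) (n i : ℕ) (hi : i ≤ n)
    (hx : ∀ j ∈ Icc 1 n, 0 ≤ x j) : 0 ≤ cumsum x i :=
  Finset.sum_nonneg fun j hj => hx j (by simp only [mem_Icc] at *; omega)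

/-- North-west style monotone coupling. -/
def clampT (F G : ℕ → ℝ) (i j : ℕ) : ℝ :=
  max 0 (min (F i) (G j) - max (F (i-1)) (G (j-1)))

lemma clampT_nonneg (F G : ℕ → ℝ) (i j : ℕ) : 0 ≤ clampT F G i j := le_max_left _ _

lemma clampT_symm (F G : ℕ → ℝ) (i j : ℕ) : clampT F G i j = clampT G F j i := by
  rw [clampT, clampT, min_comm (F i) (G j), max_comm (F (i-1)) (G (j-1))]

lemma row_sum (F G : ℕ → ℝ) (N : ℕ)
    (hF : ∀ i, 1 ≤ i → i ≤ N → F (i-1) ≤ F i)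
    (hG : ∀ j, 1 ≤ j → j ≤ N → G (j-1) ≤ G j)
    (hF0 : F 0 = 0) (hG0 : G 0 = 0) (hFG : F N = G N)
    (i : ℕ) (hi1 : 1 ≤ i) (hiN : i ≤ N) :
    ∑ j ∈ Icc 1 N, clampT F G i j = F i - F (i-1) := by
  have hq : F (i-1) ≤ F i := hF i hi1 hiN
  rw [show (∑ j ∈ Icc 1 N, clampT F G i j)
      = ∑ j ∈ Icc 1 N, max 0 (min (F i) (G j) - max (F (i-1)) (G (j-1))) from rfl,
    sum_clamp (F i) (F (i-1)) hq G 1 le_rfl N (by omega) (fun j h1 h2 => hG j h1 h2)]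
  have h0q : 0 ≤ F (i-1) := hF0 ▸ mono_of_steps F N hF 0 (i-1) (by omega) (by omega)
  have hpS : F i ≤ G N := hFG ▸ mono_of_steps F N hF i N hiN le_rfl
  have hqS : F (i-1) ≤ G N := le_trans hq hpS
  rw [show (1:ℕ) - 1 = 0 from rfl, hG0, max_eq_left h0q, min_eq_right hq,
    max_eq_right hqS, min_eq_left hpS]

lemma key (F G : ℕ → ℝ) (n k : ℕ) (hk : k ≤ n)
    (hF : ∀ i, 1 ≤ i → i ≤ n+1 → F (i-1) ≤ F i)
    (hG : ∀ j, 1 ≤ j → j ≤ n+1 → G (j-1) ≤ G j)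
    (hFG : F (n+1) = G (n+1)) :
    ∑ i ∈ Icc 1 k, ∑ j ∈ Icc (k+1) n, clampT F G i j ≤
      max (F k) (G k) - max (F 0) (G k) := by
  have step1 : ∀ i ∈ Icc 1 k,
      ∑ j ∈ Icc (k+1) n, clampT F G i j ≤ max (F i) (G k) - max (F (i-1)) (G k) := by
    intro i hi
    simp only [mem_Icc] at hi
    have hq : F (i-1) ≤ F i := hF i hi.1 (by omega)
    calc ∑ j ∈ Icc (k+1) n, clampT F G i j
        ≤ ∑ j ∈ Icc (k+1) (n+1), clampT F G i j :=
          Finset.sum_le_sum_of_subset_of_nonneg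
            (Finset.Icc_subset_Icc_right (by omega))
            (fun j _ _ => clampT_nonneg F G i j)
      _ = min (F i) (max (F (i-1)) (G (n+1))) -
            min (F i) (max (F (i-1)) (G (k+1-1))) :=
          sum_clamp (F i) (F (i-1)) hq G (k+1) (by omega) (n+1) (by omega)
            (fun j h1 h2 => hG j (by omega) h2)
      _ = max (F i) (G k) - max (F (i-1)) (G k) := by
          have h1 : F (i-1) ≤ G (n+1) :=
            hFG ▸ mono_of_steps F (n+1) hF (i-1) (n+1) (by omega) le_rfl
          have h2 : F i ≤ G (n+1) :=
            hFG ▸ mono_of_steps F (n+1) hF i (n+1) (by omega) le_rfl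
          rw [show k + 1 - 1 = k from rfl, max_eq_right h1, min_eq_left h2,
            sub_min_eq (F i) (F (i-1)) (G k) hq]
  calc ∑ i ∈ Icc 1 k, ∑ j ∈ Icc (k+1) n, clampT F G i j
      ≤ ∑ i ∈ Icc 1 k, (max (F i) (G k) - max (F (i-1)) (G k)) :=
        Finset.sum_le_sum step1
    _ = max (F k) (G k) - max (F 0) (G k) := tele (fun i => max (F i) (G k)) k

lemma abs_helper (x y : ℝ) : (x - min x y) + (y - min x y) = |x - y| := by
  rcases le_total x y with h | h
  · rw [min_eq_left h, abs_of_nonpos (by linarith)]; ring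
  · rw [min_eq_right h, abs_of_nonneg (by linarith)]; ring

lemma abs_helper2 (x y : ℝ) (hx : 0 ≤ x) (hy : 0 ≤ y) :
    (max x y - max 0 y) + (max y x - max 0 x) = |x - y| := by
  rcases le_total x y with h | h
  · rw [max_eq_right h, max_eq_left h, max_eq_right hy, max_eq_right hx,
      abs_of_nonpos (by linarith)]
    ring
  · rw [max_eq_left h, max_eq_right h, max_eq_right hy, max_eq_right hx,
      abs_of_nonneg (by linarith)]
    ring

lemma abs_decomp (n i j : ℕ) (hi1 : 1 ≤ i) (hin : i ≤ n) (hj1 : 1 ≤ j) (hjn : j ≤ n) :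
    |(i:ℝ) - (j:ℝ)| =
      ∑ k ∈ Icc 1 (n-1), ((if i ≤ k ∧ k < j then (1:ℝ) else 0) +
        (if j ≤ k ∧ k < i then (1:ℝ) else 0)) := by
  rw [Finset.sum_add_distrib, Finset.sum_boole, Finset.sum_boole]
  have h1 : (Icc 1 (n-1)).filter (fun k => i ≤ k ∧ k < j) = Ico i j := by
    ext x; simp only [mem_filter, mem_Icc, mem_Ico]; omega
  have h2 : (Icc 1 (n-1)).filter (fun k => j ≤ k ∧ k < i) = Ico j i := by
    ext x; simp only [mem_filter, mem_Icc, mem_Ico]; omega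
  rw [h1, h2, Nat.card_Ico, Nat.card_Ico]
  rcases le_total i j with h | h
  · rw [show i - j = 0 by omega, Nat.cast_sub h, Nat.cast_zero, add_zero,
      abs_of_nonpos (sub_nonpos.2 (by exact_mod_cast h))]
    ring
  · rw [show j - i = 0 by omega, Nat.cast_sub h, Nat.cast_zero, zero_add,
      abs_of_nonneg (sub_nonneg.2 (by exact_mod_cast h))]

lemma filter_double (n k : ℕ) (hk1 : 1 ≤ k) (hk2 : k ≤ n - 1) (f : ℕ → ℕ → ℝ) :
    ∑ i ∈ Icc 1 n, ∑ j ∈ Icc 1 n, f i j * (if i ≤ k ∧ k < j then (1:ℝ) else 0)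
      = ∑ i ∈ Icc 1 k, ∑ j ∈ Icc (k+1) n, f i j := by
  have hjfilter : (Icc 1 n).filter (fun j => k < j) = Icc (k+1) n := by
    ext x; simp only [mem_filter, mem_Icc]; omega
  have hifilter : (Icc 1 n).filter (fun i => i ≤ k) = Icc 1 k := by
    ext x; simp only [mem_filter, mem_Icc]; omega
  calc ∑ i ∈ Icc 1 n, ∑ j ∈ Icc 1 n, f i j * (if i ≤ k ∧ k < j then (1:ℝ) else 0)
      = ∑ i ∈ Icc 1 n, (if i ≤ k then ∑ j ∈ Icc (k+1) n, f i j else 0) := by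
        refine Finset.sum_congr rfl fun i _ => ?_
        by_cases h : i ≤ k
        · rw [if_pos h, ← hjfilter, Finset.sum_filter]
          refine Finset.sum_congr rfl fun j _ => ?_
          by_cases h2 : k < j
          · rw [if_pos h2, if_pos ⟨h, h2⟩, mul_one]
          · rw [if_neg h2, if_neg (fun hc => h2 hc.2), mul_zero]
        · rw [if_neg h]
          refine Finset.sum_eq_zero fun j _ => ?_
          rw [if_neg (fun hc => h hc.1), mul_zero]
    _ = ∑ i ∈ Icc 1 k, ∑ j ∈ Icc (k+1) n, f i j := by
        rw [← hifilter, Finset.sum_filter]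

lemma Dm_sink_sink (n : ℕ) (m : ℝ) : Dm n m (n+1) (n+1) = 0 := by simp [Dm]

lemma Dm_sink_left (n : ℕ) (m : ℝ) (j : ℕ) (hj : j ≠ n+1) : Dm n m (n+1) j = m := by
  simp [Dm, hj]

lemma Dm_sink_right (n : ℕ) (m : ℝ) (i : ℕ) (hi : i ≠ n+1) : Dm n m i (n+1) = m := by
  simp [Dm, hi]

lemma Dm_int (n : ℕ) (m : ℝ) (i j : ℕ) (hi : i ≠ n+1) (hj : j ≠ n+1) :
    Dm n m i j = |(i:ℝ) - (j:ℝ)| := by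
  simp [Dm, hi, hj]

lemma Dm_nonneg (n : ℕ) (m : ℝ) (hm : 0 ≤ m) (i j : ℕ) : 0 ≤ Dm n m i j := by
  rw [Dm]
  split_ifs
  · exact le_rfl
  · exact hm
  · exact hm
  · exact abs_nonneg _

end UOTAux

/-- the unbalanced OT distance is upper-bounded by the OTW distance. -/
theorem unbalanced_le_otw (n : ℕ) (m : ℝ) (hm : 0 ≤ m) (a b : ℕ → ℝ)
    (ha : ∀ i ∈ Finset.Icc 1 n, 0 ≤ a i) (hb : ∀ i ∈ Finset.Icc 1 n, 0 ≤ b i) :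
    uW n m a b ≤
      m * |cumsum a n - cumsum b n| +
        ∑ i ∈ Finset.Icc 1 (n-1), |cumsum a i - cumsum b i| := by
  classical
  set An := cumsum a n with hAn
  set Bn := cumsum b n with hBn
  set F := cumsum (extSeq n a Bn) with hFdef
  set G := cumsum (extSeq n b An) with hGdef
  set T := UOTAux.clampT F G with hTdef
  have hAnn : 0 ≤ An := by rw [hAn]; exact UOTAux.cumsum_nonneg a n n le_rfl ha
  have hBnn : 0 ≤ Bn := by rw [hBn]; exact UOTAux.cumsum_nonneg b n n le_rfl hb
  have hFstep : ∀ i, 1 ≤ i → i ≤ n+1 → F (i-1) ≤ F i := by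
    intro i h1 h2
    rw [hFdef, UOTAux.cumsum_step _ i h1]
    have hnn : 0 ≤ extSeq n a Bn i := by
      rw [extSeq]
      split_ifs with h
      · exact hBnn
      · exact ha i (by simp only [mem_Icc]; omega)
    linarith
  have hGstep : ∀ j, 1 ≤ j → j ≤ n+1 → G (j-1) ≤ G j := by
    intro j h1 h2
    rw [hGdef, UOTAux.cumsum_step _ j h1]
    have hnn : 0 ≤ extSeq n b An j := by
      rw [extSeq]
      split_ifs with h
      · exact hAnn
      · exact hb j (by simp only [mem_Icc]; omega)
    linarith
  have hF0 : F 0 = 0 := UOTAux.cumsum_zero _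
  have hG0 : G 0 = 0 := UOTAux.cumsum_zero _
  have hFk : ∀ k, k ≤ n → F k = cumsum a k := by
    intro k hk; rw [hFdef, UOTAux.cumsum_ext n a Bn k hk]
  have hGk : ∀ k, k ≤ n → G k = cumsum b k := by
    intro k hk; rw [hGdef, UOTAux.cumsum_ext n b An k hk]
  have hFn : F n = An := by rw [hFk n le_rfl, hAn]
  have hGn : G n = Bn := by rw [hGk n le_rfl, hBn]
  have hFN : F (n+1) = An + Bn := by
    rw [hFdef, UOTAux.cumsum_step _ (n+1) (by omega), show n + 1 - 1 = n from rfl,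
      UOTAux.cumsum_ext n a Bn n le_rfl, ← hAn, extSeq, if_pos rfl]
  have hGN : G (n+1) = Bn + An := by
    rw [hGdef, UOTAux.cumsum_step _ (n+1) (by omega), show n + 1 - 1 = n from rfl,
      UOTAux.cumsum_ext n b An n le_rfl, ← hBn, extSeq, if_pos rfl]
  have hFG : F (n+1) = G (n+1) := by rw [hFN, hGN]; ring
  -- the plan is feasible
  have hplan : IsUPlan n a b T := by
    refine ⟨fun i _ j _ => UOTAux.clampT_nonneg F G i j, ?_, ?_⟩
    · intro i hi
      simp only [mem_Icc] at hi
      rw [hTdef, UOTAux.row_sum F G (n+1) hFstep hGstep hF0 hG0 hFG i hi.1 hi.2,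
        hFdef, UOTAux.cumsum_step (extSeq n a Bn) i hi.1]
      ring
    · intro j hj
      simp only [mem_Icc] at hj
      have hswap : ∑ i ∈ Icc 1 (n+1), T i j = ∑ i ∈ Icc 1 (n+1), UOTAux.clampT G F j i :=
        Finset.sum_congr rfl fun i _ => by rw [hTdef, UOTAux.clampT_symm]
      rw [hswap, UOTAux.row_sum G F (n+1) hGstep hFstep hG0 hF0 hFG.symm j hj.1 hj.2,
        hGdef, UOTAux.cumsum_step (extSeq n b An) j hj.1]
      ring
  -- bounded below
  have hbdd : BddBelow {c | ∃ T, IsUPlan n a b T ∧ c = uCost n m T} := by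
    refine ⟨0, fun c hc => ?_⟩
    obtain ⟨T', hT', rfl⟩ := hc
    refine Finset.sum_nonneg fun i hi => Finset.sum_nonneg fun j hj => ?_
    exact mul_nonneg (hT'.1 i hi j hj) (UOTAux.Dm_nonneg n m hm i j)
  have hle : uW n m a b ≤ uCost n m T := by
    rw [uW]
    exact csInf_le hbdd ⟨T, hplan, rfl⟩
  refine le_trans hle ?_
  -- structure of the cost
  have hNmem : (n+1) ∉ Icc 1 n := by simp
  have hsplit : Icc 1 (n+1) = insert (n+1) (Icc 1 n) := by
    ext x; simp only [mem_insert, mem_Icc]; omega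
  have hTNN : T (n+1) (n+1) = min An Bn := by
    rw [hTdef, UOTAux.clampT, show n + 1 - 1 = n from rfl, hFN, hGN, hFn, hGn]
    have h1 := min_add_max An Bn
    have h2 : min (An + Bn) (Bn + An) - max An Bn = min An Bn := by
      rw [show Bn + An = An + Bn by ring, min_self]; linarith
    rw [h2, max_eq_right (le_min hAnn hBnn)]
  have hrowN : ∑ j ∈ Icc 1 (n+1), T (n+1) j = Bn := by
    rw [hTdef, UOTAux.row_sum F G (n+1) hFstep hGstep hF0 hG0 hFG (n+1) (by omega) le_rfl,
      show n + 1 - 1 = n from rfl, hFN, hFn]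
    ring
  have hcolN : ∑ i ∈ Icc 1 (n+1), T i (n+1) = An := by
    have hswap : ∑ i ∈ Icc 1 (n+1), T i (n+1)
        = ∑ i ∈ Icc 1 (n+1), UOTAux.clampT G F (n+1) i :=
      Finset.sum_congr rfl fun i _ => by rw [hTdef, UOTAux.clampT_symm]
    rw [hswap, UOTAux.row_sum G F (n+1) hGstep hFstep hG0 hF0 hFG.symm (n+1)
      (by omega) le_rfl, show n + 1 - 1 = n from rfl, hGN, hGn]
    ring
  have hrowN' : ∑ j ∈ Icc 1 n, T (n+1) j = Bn - min An Bn := by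
    have h := hrowN
    rw [hsplit, Finset.sum_insert hNmem, hTNN] at h
    linarith
  have hcolN' : ∑ i ∈ Icc 1 n, T i (n+1) = An - min An Bn := by
    have h := hcolN
    rw [hsplit, Finset.sum_insert hNmem, hTNN] at h
    linarith
  have hcost : uCost n m T = (∑ i ∈ Icc 1 n, ∑ j ∈ Icc 1 n, T i j * |(i:ℝ) - (j:ℝ)|)
      + m * (Bn - min An Bn) + m * (An - min An Bn) := by
    rw [uCost, hsplit, Finset.sum_insert hNmem]
    have h1 : ∑ j ∈ insert (n+1) (Icc 1 n), T (n+1) j * Dm n m (n+1) j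
        = m * (Bn - min An Bn) := by
      rw [Finset.sum_insert hNmem, UOTAux.Dm_sink_sink, mul_zero, zero_add,
        show (∑ j ∈ Icc 1 n, T (n+1) j * Dm n m (n+1) j)
          = ∑ j ∈ Icc 1 n, T (n+1) j * m from
          Finset.sum_congr rfl fun j hj => by
            simp only [mem_Icc] at hj
            rw [UOTAux.Dm_sink_left n m j (by omega)],
        ← Finset.sum_mul, hrowN']
      ring
    have h2 : ∀ i ∈ Icc 1 n, ∑ j ∈ insert (n+1) (Icc 1 n), T i j * Dm n m i j
        = T i (n+1) * m + ∑ j ∈ Icc 1 n, T i j * |(i:ℝ) - (j:ℝ)| := by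
      intro i hi
      simp only [mem_Icc] at hi
      rw [Finset.sum_insert hNmem]
      congr 1
      · rw [UOTAux.Dm_sink_right n m i (by omega)]
      · refine Finset.sum_congr rfl fun j hj => ?_
        simp only [mem_Icc] at hj
        rw [UOTAux.Dm_int n m i j (by omega) (by omega)]
    rw [h1, Finset.sum_congr rfl h2, Finset.sum_add_distrib, ← Finset.sum_mul, hcolN']
    ring
  -- interior bound
  have hinterior : ∑ i ∈ Icc 1 n, ∑ j ∈ Icc 1 n, T i j * |(i:ℝ) - (j:ℝ)|
      ≤ ∑ k ∈ Icc 1 (n-1), |cumsum a k - cumsum b k| := by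
    have hrw : ∑ i ∈ Icc 1 n, ∑ j ∈ Icc 1 n, T i j * |(i:ℝ) - (j:ℝ)|
        = ∑ k ∈ Icc 1 (n-1), (∑ i ∈ Icc 1 n, ∑ j ∈ Icc 1 n,
            (T i j * (if i ≤ k ∧ k < j then (1:ℝ) else 0) +
             T i j * (if j ≤ k ∧ k < i then (1:ℝ) else 0))) := by
      calc ∑ i ∈ Icc 1 n, ∑ j ∈ Icc 1 n, T i j * |(i:ℝ) - (j:ℝ)|
          = ∑ i ∈ Icc 1 n, ∑ j ∈ Icc 1 n, ∑ k ∈ Icc 1 (n-1),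
              (T i j * (if i ≤ k ∧ k < j then (1:ℝ) else 0) +
               T i j * (if j ≤ k ∧ k < i then (1:ℝ) else 0)) := by
            refine Finset.sum_congr rfl fun i hi => Finset.sum_congr rfl fun j hj => ?_
            simp only [mem_Icc] at hi hj
            rw [UOTAux.abs_decomp n i j hi.1 hi.2 hj.1 hj.2, Finset.mul_sum]
            exact Finset.sum_congr rfl fun k _ => by rw [mul_add]
        _ = ∑ i ∈ Icc 1 n, ∑ k ∈ Icc 1 (n-1), ∑ j ∈ Icc 1 n,
              (T i j * (if i ≤ k ∧ k < j then (1:ℝ) else 0) +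
               T i j * (if j ≤ k ∧ k < i then (1:ℝ) else 0)) :=
            Finset.sum_congr rfl fun i _ => Finset.sum_comm
        _ = _ := Finset.sum_comm
    rw [hrw]
    refine Finset.sum_le_sum fun k hk => ?_
    simp only [mem_Icc] at hk
    have hPs : ∀ i ∈ Icc 1 n,
        (∑ j ∈ Icc 1 n, (T i j * (if i ≤ k ∧ k < j then (1:ℝ) else 0) +
          T i j * (if j ≤ k ∧ k < i then (1:ℝ) else 0)))
        = (∑ j ∈ Icc 1 n, T i j * (if i ≤ k ∧ k < j then (1:ℝ) else 0)) +
          (∑ j ∈ Icc 1 n, T i j * (if j ≤ k ∧ k < i then (1:ℝ) else 0)) :=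
      fun i _ => Finset.sum_add_distrib
    rw [Finset.sum_congr rfl hPs, Finset.sum_add_distrib]
    have hP : ∑ i ∈ Icc 1 n, ∑ j ∈ Icc 1 n,
        T i j * (if i ≤ k ∧ k < j then (1:ℝ) else 0)
        = ∑ i ∈ Icc 1 k, ∑ j ∈ Icc (k+1) n, T i j :=
      UOTAux.filter_double n k hk.1 hk.2 T
    have hQ : ∑ i ∈ Icc 1 n, ∑ j ∈ Icc 1 n,
        T i j * (if j ≤ k ∧ k < i then (1:ℝ) else 0)
        = ∑ j ∈ Icc 1 k, ∑ i ∈ Icc (k+1) n, T i j := by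
      rw [Finset.sum_comm]
      exact UOTAux.filter_double n k hk.1 hk.2 (fun j i => T i j)
    rw [hP, hQ]
    have hkn : k ≤ n := by omega
    have hPb : ∑ i ∈ Icc 1 k, ∑ j ∈ Icc (k+1) n, T i j
        ≤ max (cumsum a k) (cumsum b k) - max 0 (cumsum b k) := by
      have h := UOTAux.key F G n k hkn hFstep hGstep hFG
      rwa [hFk k hkn, hGk k hkn, hF0] at h
    have hQb : ∑ j ∈ Icc 1 k, ∑ i ∈ Icc (k+1) n, T i j
        ≤ max (cumsum b k) (cumsum a k) - max 0 (cumsum a k) := by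
      have h := UOTAux.key G F n k hkn hGstep hFstep hFG.symm
      have hsw : ∑ j ∈ Icc 1 k, ∑ i ∈ Icc (k+1) n, T i j
          = ∑ j ∈ Icc 1 k, ∑ i ∈ Icc (k+1) n, UOTAux.clampT G F j i :=
        Finset.sum_congr rfl fun j _ => Finset.sum_congr rfl fun i _ => by
          rw [hTdef, UOTAux.clampT_symm]
      rwa [← hsw, hGk k hkn, hFk k hkn, hG0] at h
    have habs := UOTAux.abs_helper2 (cumsum a k) (cumsum b k)
      (UOTAux.cumsum_nonneg a n k hkn ha) (UOTAux.cumsum_nonneg b n k hkn hb)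
    linarith
  have habsN : (An - min An Bn) + (Bn - min An Bn) = |An - Bn| :=
    UOTAux.abs_helper An Bn
  rw [hcost]
  have hmabs : m * (Bn - min An Bn) + m * (An - min An Bn) = m * |An - Bn| := by
    rw [← habsN]; ring
  linarith [hinterior]


end
end
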